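/- Fix a prime p and n ≥ 1. Let X ∈ M_n(ℚ_p) have characteristic polynomial irreducible over ℚ_p, let f : M_n(ℚ_p) → ℝ be a locally constant function with compact support, and let μ be a Haar measure on SL_n(ℚ_p). Then the function g ↦ f(g⁻¹ X g) on SL_n(ℚ_p) is locally constant with compact support; in particular the orbital integral ∫_{SL_n(ℚ_p)} f(g⁻¹ X g) dμ(g) converges (the integrand is μ-integrable). -/

import Mathlib

open MeasureTheory

noncomputable instance (p : ℕ) [Fact p.Prime] (n : ℕ) :
    TopologicalSpace (Matrix.SpecialLinearGroup (Fin n) ℚ_[p]) :=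
  inferInstanceAs (TopologicalSpace {A : Matrix (Fin n) (Fin n) ℚ_[p] // A.det = 1})

open Polynomial Matrix
set_option maxHeartbeats 1000000


variable {p : ℕ} [Fact p.Prime] {n : ℕ}

lemma aux_isUnit_aeval (X : Matrix (Fin n) (Fin n) ℚ_[p]) (hX : Irreducible X.charpoly)
    (q : ℚ_[p][X]) (hq : ¬ X.charpoly ∣ q) : IsUnit (aeval X q) := by
  obtain ⟨a, b, hab⟩ := (hX.coprime_iff_not_dvd.mpr hq)
  have h1 : aeval X b * aeval X q = 1 := by
    have := congrArg (aeval X) hab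
    simpa [Matrix.aeval_self_charpoly X] using this
  have h2 : aeval X q * aeval X b = 1 := by
    rw [← _root_.map_mul, mul_comm, _root_.map_mul, h1]
  exact ⟨⟨aeval X q, aeval X b, h2, h1⟩, rfl⟩

lemma aux_aeval_mem (X : Matrix (Fin n) (Fin n) ℚ_[p])
    (W : Submodule ℚ_[p] (Fin n → ℚ_[p])) (hW : ∀ w ∈ W, X.mulVec w ∈ W)
    {v : Fin n → ℚ_[p]} (hv : v ∈ W) (q : ℚ_[p][X]) : (aeval X q).mulVec v ∈ W := by
  induction q using Polynomial.induction_on' with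
  | add f g hf hg => simpa [Matrix.add_mulVec] using W.add_mem hf hg
  | monomial k a =>
      have hk : (X ^ k).mulVec v ∈ W := by
        induction k with
        | zero => simpa using hv
        | succ m ih =>
            have := hW _ ih
            simpa [pow_succ', Matrix.mulVec_mulVec] using this
      simpa [aeval_monomial, ← Algebra.smul_def, Matrix.smul_mulVec] using W.smul_mem a hk

lemma aux_invariant_eq_top (X : Matrix (Fin n) (Fin n) ℚ_[p]) (hX : Irreducible X.charpoly)
    (W : Submodule ℚ_[p] (Fin n → ℚ_[p])) (hW : ∀ w ∈ W, X.mulVec w ∈ W)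
    (hne : W ≠ ⊥) : W = ⊤ := by
  obtain ⟨v, hvW, hv0⟩ := Submodule.exists_mem_ne_zero_of_ne_bot hne
  -- the linear map degreeLT n → ℚ_p^n, q ↦ (aeval X q) *ᵥ v
  let φ : Polynomial.degreeLT ℚ_[p] n →ₗ[ℚ_[p]] (Fin n → ℚ_[p]) :=
    { toFun := fun q => (aeval X (q : ℚ_[p][X])).mulVec v
      map_add' := by intro a b; simp [Matrix.add_mulVec]
      map_smul' := by intro c a; simp [Matrix.smul_mulVec] }
  have hinj : Function.Injective φ := by
    rw [← LinearMap.ker_eq_bot, LinearMap.ker_eq_bot']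
    rintro ⟨q, hq⟩ hq0
    rw [Polynomial.mem_degreeLT] at hq
    apply Subtype.ext
    by_contra hqne
    have hdvd : ¬ X.charpoly ∣ q := by
      intro hdvd
      exact hqne (Polynomial.eq_zero_of_dvd_of_degree_lt hdvd
        (by rwa [Matrix.charpoly_degree_eq_dim, Fintype.card_fin]))
    obtain ⟨u, hu⟩ := aux_isUnit_aeval X hX q hdvd
    have h0 : (aeval X q).mulVec v = 0 := by simpa [φ] using hq0
    have : v = 0 := by
      have h1 : ((u⁻¹ : _) : Matrix (Fin n) (Fin n) ℚ_[p]) * aeval X q = 1 := by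
        rw [← hu]; exact u.inv_mul
      calc v = (((u⁻¹ : _) : Matrix (Fin n) (Fin n) ℚ_[p]) * aeval X q).mulVec v := by
              rw [h1, Matrix.one_mulVec]
        _ = 0 := by rw [← Matrix.mulVec_mulVec, h0, Matrix.mulVec_zero]
    exact hv0 this
  have hrange : LinearMap.range φ ≤ W := by
    rintro _ ⟨q, rfl⟩
    exact aux_aeval_mem X W hW hvW _
  have hfr : n ≤ Module.finrank ℚ_[p] W := by
    have h1 : Module.finrank ℚ_[p] (LinearMap.range φ) =
        Module.finrank ℚ_[p] (Polynomial.degreeLT ℚ_[p] n) :=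
      LinearMap.finrank_range_of_inj hinj
    have h2 : Module.finrank ℚ_[p] (Polynomial.degreeLT ℚ_[p] n) = n := by
      rw [(Polynomial.degreeLTEquiv ℚ_[p] n).finrank_eq]
      simp
    have := Submodule.finrank_mono hrange
    omega
  apply Submodule.eq_top_of_finrank_eq
  have hle := Submodule.finrank_le W
  simp only [Module.finrank_pi, Fintype.card_fin] at hle ⊢
  omega

lemma aux_det_ne_zero (X : Matrix (Fin n) (Fin n) ℚ_[p]) (hX : Irreducible X.charpoly)
    (h Y : Matrix (Fin n) (Fin n) ℚ_[p]) (hh : h ≠ 0) (hrel : X * h = h * Y) :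
    h.det ≠ 0 := by
  set W : Submodule ℚ_[p] (Fin n → ℚ_[p]) := LinearMap.range (Matrix.mulVecLin h) with hWdef
  have hWinv : ∀ w ∈ W, X.mulVec w ∈ W := by
    rintro _ ⟨u, rfl⟩
    refine ⟨Y.mulVec u, ?_⟩
    simp only [Matrix.mulVecLin_apply, Matrix.mulVec_mulVec, ← hrel]
  have hWne : W ≠ ⊥ := by
    intro hbot
    apply hh
    have h0 : Matrix.mulVecLin h = 0 := LinearMap.range_eq_bot.mp hbot
    ext i j
    have h2 : h.mulVec (Pi.single j 1) = 0 := by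
      rw [show h.mulVec (Pi.single j 1) = Matrix.mulVecLin h (Pi.single j 1) from rfl, h0]
      rfl
    have := congrFun h2 i
    simpa [Matrix.mulVec_single] using this
  have htop : W = ⊤ := aux_invariant_eq_top X hX W hWinv hWne
  have hsurj : Function.Surjective h.mulVec := by
    intro w
    obtain ⟨u, hu⟩ : w ∈ W := htop ▸ Submodule.mem_top
    exact ⟨u, hu⟩
  have : IsUnit h.det := Matrix.isUnit_iff_isUnit_det h |>.mp
    (Matrix.mulVec_surjective_iff_isUnit.mp hsurj)
  exact this.ne_zero



instance aux_fc : FirstCountableTopology (Matrix (Fin n) (Fin n) ℚ_[p]) :=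
  inferInstanceAs (FirstCountableTopology (Fin n → Fin n → ℚ_[p]))

-- compactness of entrywise balls
lemma aux_ball_compact (r : ℝ) :
    IsCompact {A : Matrix (Fin n) (Fin n) ℚ_[p] | ∀ i j, ‖A i j‖ ≤ r} := by
  have h := isCompact_univ_pi (ι := Fin n)
    (s := fun _ => {v : Fin n → ℚ_[p] | ∀ j, ‖v j‖ ≤ r}) (fun i => by
      have h2 := isCompact_univ_pi (ι := Fin n)
        (s := fun _ => Metric.closedBall (0 : ℚ_[p]) r) (fun j => isCompact_closedBall _ _)
      convert h2 using 1
      ext v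
      simp [Set.mem_pi, mem_closedBall_zero_iff])
  suffices hs : {A : Matrix (Fin n) (Fin n) ℚ_[p] | ∀ i j, ‖A i j‖ ≤ r} =
      Set.pi Set.univ (fun _ : Fin n => {v : Fin n → ℚ_[p] | ∀ j, ‖v j‖ ≤ r}) by
    rw [hs]; exact h
  ext A
  constructor
  · intro hA i _ 
    intro j
    exact hA i j
  · intro hA i j
    exact hA i (Set.mem_univ i) j

lemma aux_S_compact (hn : 1 ≤ n) (X : Matrix (Fin n) (Fin n) ℚ_[p])
    (hdet : ∀ h Y : Matrix (Fin n) (Fin n) ℚ_[p], h ≠ 0 → X * h = h * Y → h.det ≠ 0)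
    (L : Set (Matrix (Fin n) (Fin n) ℚ_[p])) (hL : IsCompact L) :
    IsCompact {A : Matrix (Fin n) (Fin n) ℚ_[p] |
      A.det = 1 ∧ A.adjugate * X * A ∈ L} := by
  set S := {A : Matrix (Fin n) (Fin n) ℚ_[p] | A.det = 1 ∧ A.adjugate * X * A ∈ L} with hS
  have hcont : Continuous fun A : Matrix (Fin n) (Fin n) ℚ_[p] => A.adjugate * X * A :=
    ((continuous_id.matrix_adjugate.matrix_mul continuous_const).matrix_mul continuous_id)
  have hSclosed : IsClosed S := by
    apply IsClosed.inter
    · exact isClosed_eq (continuous_id.matrix_det) continuous_const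
    · exact hL.isClosed.preimage hcont
  -- boundedness
  obtain ⟨m, hm⟩ : ∃ m : ℕ, S ⊆ {A | ∀ i j, ‖A i j‖ ≤ (p : ℝ) ^ m} := by
    by_contra hub
    push_neg at hub
    have hchoice : ∀ k : ℕ, ∃ A : Matrix (Fin n) (Fin n) ℚ_[p],
        A ∈ S ∧ ∃ i j, (p : ℝ) ^ k < ‖A i j‖ := by
      intro k
      obtain ⟨A, hAS, hnot⟩ := Set.not_subset.mp (hub k)
      refine ⟨A, hAS, ?_⟩
      simpa using hnot
    choose A hAS hbig using hchoice
    -- maximal entry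
    have hne : (Finset.univ : Finset (Fin n × Fin n)).Nonempty :=
      ⟨⟨⟨0, hn⟩, ⟨0, hn⟩⟩, Finset.mem_univ _⟩
    have hmax : ∀ k : ℕ, ∃ ij : Fin n × Fin n,
        (∀ i j, ‖A k i j‖ ≤ ‖A k ij.1 ij.2‖) ∧ (p : ℝ) ^ k < ‖A k ij.1 ij.2‖ := by
      intro k
      obtain ⟨ij, _, hij⟩ := Finset.exists_max_image Finset.univ
        (fun ij : Fin n × Fin n => ‖A k ij.1 ij.2‖) hne
      refine ⟨ij, fun i j => hij ⟨i, j⟩ (Finset.mem_univ _), ?_⟩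
      obtain ⟨i, j, hij2⟩ := hbig k
      exact lt_of_lt_of_le hij2 (hij ⟨i, j⟩ (Finset.mem_univ _))
    choose ij hmax1 hmax2 using hmax
    set c : ℕ → ℚ_[p] := fun k => A k (ij k).1 (ij k).2 with hc
    have hcpos : ∀ k, (1:ℝ) ≤ ‖c k‖ := fun k =>
      le_trans (one_le_pow₀ (by exact_mod_cast (Fact.out : p.Prime).one_le)) (le_of_lt (hmax2 k))
    have hcne : ∀ k, c k ≠ 0 := by
      intro k hk
      have := hcpos k
      rw [hk] at this
      simp at this
      linarith
    set h : ℕ → Matrix (Fin n) (Fin n) ℚ_[p] := fun k => (c k)⁻¹ • A k with hh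
    set Y : ℕ → Matrix (Fin n) (Fin n) ℚ_[p] := fun k => (A k).adjugate * X * A k with hY
    have hYL : ∀ k, Y k ∈ L := fun k => (hAS k).2
    have hrel : ∀ k, X * h k = h k * Y k := by
      intro k
      have h1 : A k * Y k = X * A k := by
        rw [hY]
        calc A k * ((A k).adjugate * X * A k)
            = (A k * (A k).adjugate) * X * A k := by
              simp only [← Matrix.mul_assoc]
          _ = X * A k := by
              rw [Matrix.mul_adjugate, (hAS k).1, one_smul, Matrix.one_mul]
      rw [hh]
      simp only [Matrix.mul_smul, Matrix.smul_mul, h1]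
    have hball : ∀ k, h k ∈ {B : Matrix (Fin n) (Fin n) ℚ_[p] | ∀ i j, ‖B i j‖ ≤ 1} := by
      intro k i j
      have : ‖h k i j‖ = ‖c k‖⁻¹ * ‖A k i j‖ := by
        rw [hh]
        simp [Matrix.smul_apply, smul_eq_mul, norm_mul]
      rw [this, inv_mul_le_one₀ (by linarith [hcpos k])]
      · exact hmax1 k i j
    -- compact container
    obtain ⟨⟨hl, Yl⟩, hmem, φ, hφ, htend⟩ :=
      ((aux_ball_compact (p := p) (n := n) 1).prod hL).tendsto_subseq
        (x := fun k => (h k, Y k)) (fun k => ⟨hball k, hYL k⟩)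
    have htendh : Filter.Tendsto (fun k => h (φ k)) Filter.atTop (nhds hl) :=
      (continuous_fst.tendsto _).comp htend
    have htendY : Filter.Tendsto (fun k => Y (φ k)) Filter.atTop (nhds Yl) :=
      (continuous_snd.tendsto _).comp htend
    -- limit relation
    have hrel' : X * hl = hl * Yl := by
      have t1 : Filter.Tendsto (fun k => X * h (φ k)) Filter.atTop (nhds (X * hl)) :=
        tendsto_const_nhds.mul htendh
      have t2 : Filter.Tendsto (fun k => h (φ k) * Y (φ k)) Filter.atTop (nhds (hl * Yl)) :=
        htendh.mul htendY
      have : (fun k => X * h (φ k)) = fun k => h (φ k) * Y (φ k) := funext fun k => hrel (φ k)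
      rw [this] at t1
      exact tendsto_nhds_unique t1 t2
    -- det limit is 0
    have hdet0 : hl.det = 0 := by
      have t1 : Filter.Tendsto (fun k => (h (φ k)).det) Filter.atTop (nhds hl.det) :=
        ((continuous_id.matrix_det).tendsto hl).comp htendh
      have hnorm : ∀ k, ‖(h (φ k)).det‖ ≤ ((p:ℝ)⁻¹) ^ k := by
        intro k
        have hd : (h (φ k)).det = ((c (φ k))⁻¹) ^ (Fintype.card (Fin n)) * (A (φ k)).det := by
          rw [hh]; simp [Matrix.det_smul, smul_eq_mul]
        rw [hd, (hAS (φ k)).1, mul_one, norm_pow, norm_inv, Fintype.card_fin]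
        have h1 : ‖c (φ k)‖⁻¹ ≤ (p:ℝ)⁻¹ ^ (φ k) := by
          rw [inv_pow]
          exact inv_anti₀ (by have := (Fact.out : p.Prime).pos; positivity) (le_of_lt (hmax2 (φ k)))
        calc ‖c (φ k)‖⁻¹ ^ n ≤ ‖c (φ k)‖⁻¹ ^ 1 := by
              apply pow_le_pow_of_le_one (by positivity) _ hn
              rw [inv_le_one_iff₀]; right; exact hcpos (φ k)
          _ = ‖c (φ k)‖⁻¹ := pow_one _
          _ ≤ (p:ℝ)⁻¹ ^ (φ k) := h1
          _ ≤ (p:ℝ)⁻¹ ^ k := by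
              apply pow_le_pow_of_le_one (by positivity) _ (hφ.le_apply)
              rw [inv_le_one_iff₀]; right
              exact_mod_cast (Fact.out : p.Prime).one_le
      have t2 : Filter.Tendsto (fun k => (h (φ k)).det) Filter.atTop (nhds 0) := by
        rw [tendsto_zero_iff_norm_tendsto_zero]
        apply squeeze_zero (fun k => norm_nonneg _) hnorm
        apply tendsto_pow_atTop_nhds_zero_of_lt_one (by positivity)
        rw [inv_lt_one_iff₀]; right
        exact_mod_cast (Fact.out : p.Prime).one_lt
      exact tendsto_nhds_unique t1 t2
    -- hl ≠ 0
    have hlne : hl ≠ 0 := by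
      have hFcont : Continuous fun B : Matrix (Fin n) (Fin n) ℚ_[p] =>
          ∑ i, ∑ j, ‖B i j‖ := by
        apply continuous_finset_sum
        intro i _
        apply continuous_finset_sum
        intro j _
        exact (continuous_id.matrix_elem i j).norm
      have hF1 : ∀ k, (1:ℝ) ≤ ∑ i, ∑ j, ‖h (φ k) i j‖ := by
        intro k
        have hentry : ‖h (φ k) (ij (φ k)).1 (ij (φ k)).2‖ = 1 := by
          rw [hh]
          simp only [Matrix.smul_apply, smul_eq_mul, norm_mul, norm_inv]
          rw [inv_mul_cancel₀ (by have := hcpos (φ k); intro h0; rw [h0] at this; norm_num at this)]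
        calc (1:ℝ) = ‖h (φ k) (ij (φ k)).1 (ij (φ k)).2‖ := hentry.symm
          _ ≤ ∑ j, ‖h (φ k) (ij (φ k)).1 j‖ := by
              apply Finset.single_le_sum (fun j _ => norm_nonneg _) (Finset.mem_univ _)
          _ ≤ ∑ i, ∑ j, ‖h (φ k) i j‖ :=
              Finset.single_le_sum (f := fun i => ∑ j, ‖h (φ k) i j‖)
                (fun i _ => Finset.sum_nonneg fun j _ => norm_nonneg _) (Finset.mem_univ _)
      have htendF : Filter.Tendsto (fun k => ∑ i, ∑ j, ‖h (φ k) i j‖)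
          Filter.atTop (nhds (∑ i, ∑ j, ‖hl i j‖)) :=
        (hFcont.tendsto hl).comp htendh
      have : (1:ℝ) ≤ ∑ i, ∑ j, ‖hl i j‖ := le_of_tendsto_of_tendsto' tendsto_const_nhds htendF hF1
      intro h0
      rw [h0] at this
      simp at this
      linarith
    exact hdet hl Yl hlne hrel' hdet0
  exact (aux_ball_compact ((p:ℝ)^m)).of_isClosed_subset hSclosed hm


instance (p : ℕ) [Fact p.Prime] (n : ℕ) :
    T2Space (Matrix.SpecialLinearGroup (Fin n) ℚ_[p]) :=
  inferInstanceAs (T2Space {A : Matrix (Fin n) (Fin n) ℚ_[p] // A.det = 1})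

lemma aux_coe_cont : Continuous
    (fun g : Matrix.SpecialLinearGroup (Fin n) ℚ_[p] => (g : Matrix (Fin n) (Fin n) ℚ_[p])) :=
  continuous_subtype_val

lemma aux_phi_cont (X : Matrix (Fin n) (Fin n) ℚ_[p]) : Continuous
    (fun g : Matrix.SpecialLinearGroup (Fin n) ℚ_[p] =>
      ((g⁻¹ : Matrix.SpecialLinearGroup (Fin n) ℚ_[p]) : Matrix (Fin n) (Fin n) ℚ_[p]) *
        X * (g : Matrix (Fin n) (Fin n) ℚ_[p])) := by
  have : (fun g : Matrix.SpecialLinearGroup (Fin n) ℚ_[p] =>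
      ((g⁻¹ : Matrix.SpecialLinearGroup (Fin n) ℚ_[p]) : Matrix (Fin n) (Fin n) ℚ_[p]) *
        X * (g : Matrix (Fin n) (Fin n) ℚ_[p])) = fun g : Matrix.SpecialLinearGroup (Fin n) ℚ_[p] =>
      ((g : Matrix (Fin n) (Fin n) ℚ_[p]).adjugate * X * (g : Matrix (Fin n) (Fin n) ℚ_[p])) := by
    funext g
    rw [Matrix.SpecialLinearGroup.coe_inv]
  rw [this]
  exact (aux_coe_cont.matrix_adjugate.matrix_mul continuous_const).matrix_mul aux_coe_cont

lemma aux_cpt_support (X : Matrix (Fin n) (Fin n) ℚ_[p])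
    (f : Matrix (Fin n) (Fin n) ℚ_[p] → ℝ)
    (hS : IsCompact {A : Matrix (Fin n) (Fin n) ℚ_[p] |
      A.det = 1 ∧ A.adjugate * X * A ∈ tsupport f}) :
    HasCompactSupport (fun g : Matrix.SpecialLinearGroup (Fin n) ℚ_[p] =>
        f (((g⁻¹ : Matrix.SpecialLinearGroup (Fin n) ℚ_[p]) : Matrix (Fin n) (Fin n) ℚ_[p]) *
          X * (g : Matrix (Fin n) (Fin n) ℚ_[p]))) := by
  set S := {A : Matrix (Fin n) (Fin n) ℚ_[p] | A.det = 1 ∧ A.adjugate * X * A ∈ tsupport f}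
  set T : Set (Matrix.SpecialLinearGroup (Fin n) ℚ_[p]) :=
    (fun g : Matrix.SpecialLinearGroup (Fin n) ℚ_[p] => (g : Matrix (Fin n) (Fin n) ℚ_[p])) ⁻¹' S
    with hT
  have hTcpt : IsCompact T := by
    have hemb : Topology.IsEmbedding
        (fun g : Matrix.SpecialLinearGroup (Fin n) ℚ_[p] =>
          (g : Matrix (Fin n) (Fin n) ℚ_[p])) :=
      Topology.IsEmbedding.subtypeVal
    rw [hemb.isCompact_iff]
    have himg : (fun g : Matrix.SpecialLinearGroup (Fin n) ℚ_[p] =>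
        (g : Matrix (Fin n) (Fin n) ℚ_[p])) '' T = S := by
      apply Set.Subset.antisymm
      · rintro _ ⟨g, hg, rfl⟩; exact hg
      · rintro A ⟨hA1, hA2⟩
        exact ⟨⟨A, hA1⟩, ⟨hA1, hA2⟩, rfl⟩
    rwa [himg]
  apply HasCompactSupport.of_support_subset_isCompact hTcpt
  intro g hg
  simp only [Function.mem_support, ne_eq] at hg
  have : ((g⁻¹ : Matrix.SpecialLinearGroup (Fin n) ℚ_[p]) : Matrix (Fin n) (Fin n) ℚ_[p]) *
      X * (g : Matrix (Fin n) (Fin n) ℚ_[p]) ∈ tsupport f :=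
    subset_tsupport f hg
  refine Set.mem_preimage.mpr ⟨g.prop, ?_⟩
  rwa [← Matrix.SpecialLinearGroup.coe_inv]

/-- **Convergence of elliptic orbital integrals.**
Fix a prime `p` and `n ≥ 1`.  Let `X ∈ M_n(ℚ_p)` have irreducible characteristic
polynomial, let `f : M_n(ℚ_p) → ℝ` be locally constant with compact support, and let `μ`
be a Haar measure on `SL_n(ℚ_p)`.  Then `g ↦ f(g⁻¹ X g)` is locally constant with
compact support on `SL_n(ℚ_p)`; in particular it is `μ`-integrable, i.e. the orbital
integral `∫_{SL_n(ℚ_p)} f(g⁻¹ X g) dμ(g)` converges. -/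
theorem orbital_integral_converges
    (p : ℕ) [Fact p.Prime] (n : ℕ) (hn : 1 ≤ n)
    (X : Matrix (Fin n) (Fin n) ℚ_[p]) (hX : Irreducible X.charpoly)
    (f : Matrix (Fin n) (Fin n) ℚ_[p] → ℝ)
    (hf : IsLocallyConstant f) (hfc : HasCompactSupport f)
    [MeasurableSpace (Matrix.SpecialLinearGroup (Fin n) ℚ_[p])]
    [BorelSpace (Matrix.SpecialLinearGroup (Fin n) ℚ_[p])]
    (μ : Measure (Matrix.SpecialLinearGroup (Fin n) ℚ_[p])) [μ.IsHaarMeasure] :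
    IsLocallyConstant (fun g : Matrix.SpecialLinearGroup (Fin n) ℚ_[p] =>
        f (((g⁻¹ : Matrix.SpecialLinearGroup (Fin n) ℚ_[p]) : Matrix (Fin n) (Fin n) ℚ_[p]) *
          X * (g : Matrix (Fin n) (Fin n) ℚ_[p]))) ∧
    HasCompactSupport (fun g : Matrix.SpecialLinearGroup (Fin n) ℚ_[p] =>
        f (((g⁻¹ : Matrix.SpecialLinearGroup (Fin n) ℚ_[p]) : Matrix (Fin n) (Fin n) ℚ_[p]) *
          X * (g : Matrix (Fin n) (Fin n) ℚ_[p]))) ∧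
    Integrable (fun g : Matrix.SpecialLinearGroup (Fin n) ℚ_[p] =>
        f (((g⁻¹ : Matrix.SpecialLinearGroup (Fin n) ℚ_[p]) : Matrix (Fin n) (Fin n) ℚ_[p]) *
          X * (g : Matrix (Fin n) (Fin n) ℚ_[p]))) μ := by
  have hlc : IsLocallyConstant (fun g : Matrix.SpecialLinearGroup (Fin n) ℚ_[p] =>
      f (((g⁻¹ : Matrix.SpecialLinearGroup (Fin n) ℚ_[p]) : Matrix (Fin n) (Fin n) ℚ_[p]) *
        X * (g : Matrix (Fin n) (Fin n) ℚ_[p]))) :=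
    hf.comp_continuous (aux_phi_cont X)
  have hScpt : IsCompact {A : Matrix (Fin n) (Fin n) ℚ_[p] |
      A.det = 1 ∧ A.adjugate * X * A ∈ tsupport f} :=
    aux_S_compact hn X (fun h Y hh hrel => aux_det_ne_zero X hX h Y hh hrel) _ hfc
  have hcs := aux_cpt_support X f hScpt
  exact ⟨hlc, hcs, hlc.continuous.integrable_of_hasCompactSupport hcs⟩
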